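/- Suppose X : ℝ → ℝᵐ satisfies the second-order ODE Ẍ = (BᵀQḂ + (μ/ρ)BᵀQGQB)(BᵀQB)^{-1}Ẋ + (h²/ρ)BᵀQB F(X), where F(X) = -∇W(X), B(t) differentiable, Q symmetric idempotent, G symmetric negative semidefinite. Then V_r(t) = (h²/ρ)W(X(t)) + (1/2)Ẋᵀ(BᵀQB)^{-1}Ẋ satisfies V̇_r(t) = (μ/ρ)YᵀGY ≤ 0 where Y = QB(BᵀQB)^{-1}Ẋ. -/

import Mathlib

/-! With `z = P⁻¹ Ẋ`, the kinetic term `½ Ẋᵀ P⁻¹ Ẋ` has derivative `Ẍ ⬝ z - ½ zᵀ Ṗ z`, and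
since `Ṗ = ḂᵀQB + BᵀQḂ` with `Q` symmetric, `½ zᵀ Ṗ z = zᵀ (BᵀQḂ) z`. Pairing the equation of
motion with `z` gives `Ẍ ⬝ z = zᵀ (BᵀQḂ) z + (μ/ρ) zᵀ (BᵀQGQB) z - (h²/ρ) ∇W ⬝ Ẋ`, so in `V̇_r`
the `BᵀQḂ` terms and the potential terms cancel, leaving `(μ/ρ) zᵀ BᵀQGQB z = (μ/ρ) Yᵀ G Y`
with `Y = QBz`, which is `≤ 0` because `G` is negative semidefinite. -/

open Matrix

attribute [local instance] Matrix.linftyOpNormedAddCommGroup Matrix.linftyOpNormedSpace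
attribute [local instance] Matrix.linftyOpNormedRing Matrix.linftyOpNormedAlgebra

namespace Matrix

variable {R : Type*} {m n : Type*} [Fintype m] [Fintype n]

theorem IsSymm.dotProduct_mulVec_comm [CommSemiring R] {A : Matrix n n R} (hA : A.IsSymm)
    (v w : n → R) :
    v ⬝ᵥ A *ᵥ w = w ⬝ᵥ A *ᵥ v := by
  rw [← dotProduct_transpose_mulVec, hA.eq]

theorem dotProduct_transpose_add_mulVec_self [CommSemiring R] (M : Matrix n n R) (v : n → R) :
    v ⬝ᵥ (Mᵀ + M) *ᵥ v = 2 * (v ⬝ᵥ M *ᵥ v) := by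
  rw [add_mulVec, dotProduct_add, dotProduct_transpose_mulVec, two_mul]

theorem dotProduct_transpose_mul_mul_mulVec [CommSemiring R] (C : Matrix m n R)
    (M : Matrix m m R) (v : n → R) :
    v ⬝ᵥ (Cᵀ * M * C) *ᵥ v = C *ᵥ v ⬝ᵥ M *ᵥ (C *ᵥ v) := by
  rw [← mulVec_mulVec, ← mulVec_mulVec, dotProduct_transpose_mulVec, dotProduct_comm]

theorem dotProduct_mul_inv_mulVec_add_mulVec [CommRing R] [DecidableEq n] {A : Matrix n n R}
    (hA : A.IsSymm) (hunit : IsUnit A) (M : Matrix n n R) (x f : n → R) :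
    ((M * A⁻¹) *ᵥ x + A *ᵥ f) ⬝ᵥ A⁻¹ *ᵥ x = A⁻¹ *ᵥ x ⬝ᵥ M *ᵥ (A⁻¹ *ᵥ x) + f ⬝ᵥ x := by
  rw [add_dotProduct, ← mulVec_mulVec, dotProduct_comm (M *ᵥ _), dotProduct_comm (A *ᵥ f),
    hA.dotProduct_mulVec_comm, mulVec_mulVec x A,
    mul_nonsing_inv A ((isUnit_iff_isUnit_det A).mp hunit), one_mulVec]

end Matrix

section Calculus

variable {𝕜 : Type*} [NontriviallyNormedField 𝕜] [CompleteSpace 𝕜] {x : 𝕜}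

theorem LinearMap.hasDerivAt_of_bilinear
    {E F G : Type*} [NormedAddCommGroup E] [NormedSpace 𝕜 E] [FiniteDimensional 𝕜 E]
    [NormedAddCommGroup F] [NormedSpace 𝕜 F] [FiniteDimensional 𝕜 F]
    [NormedAddCommGroup G] [NormedSpace 𝕜 G]
    (b : E →ₗ[𝕜] F →ₗ[𝕜] G) {u : 𝕜 → E} {v : 𝕜 → F} {u' : E} {v' : F}
    (hu : HasDerivAt u u' x) (hv : HasDerivAt v v' x) :
    HasDerivAt (fun s => b (u s) (v s)) (b (u x) v' + b u' (v x)) x :=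
  b.toContinuousBilinearMap.hasDerivAt_of_bilinear (fun _ => hu) (fun _ => hv)

variable {l m n : Type*} [Fintype l] [Fintype m] [Fintype n]

theorem HasDerivAt.dotProduct {u v : 𝕜 → l → 𝕜} {u' v' : l → 𝕜}
    (hu : HasDerivAt u u' x) (hv : HasDerivAt v v' x) :
    HasDerivAt (fun s => u s ⬝ᵥ v s) (u' ⬝ᵥ v x + u x ⬝ᵥ v') x := by
  simpa [add_comm] using (dotProductBilin 𝕜 𝕜).hasDerivAt_of_bilinear hu hv

theorem HasDerivAt.mulVec {M : 𝕜 → Matrix l m 𝕜} {v : 𝕜 → m → 𝕜} {M' : Matrix l m 𝕜}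
    {v' : m → 𝕜} (hM : HasDerivAt M M' x) (hv : HasDerivAt v v' x) :
    HasDerivAt (fun s => M s *ᵥ v s) (M' *ᵥ v x + M x *ᵥ v') x := by
  simpa [add_comm] using (mulVecBilin 𝕜 𝕜).hasDerivAt_of_bilinear hM hv

theorem HasDerivAt.matrixMul {M : 𝕜 → Matrix l m 𝕜} {N : 𝕜 → Matrix m n 𝕜}
    {M' : Matrix l m 𝕜} {N' : Matrix m n 𝕜} (hM : HasDerivAt M M' x) (hN : HasDerivAt N N' x) :
    HasDerivAt (fun s => M s * N s) (M' * N x + M x * N') x := by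
  have := (mulLinearMap 𝕜).hasDerivAt_of_bilinear hM hN
  simp only [mulLinearMap_apply_apply] at this
  rw [add_comm]
  exact this

theorem HasDerivAt.matrixTranspose {M : 𝕜 → Matrix l m 𝕜} {M' : Matrix l m 𝕜}
    (hM : HasDerivAt M M' x) : HasDerivAt (fun s => (M s)ᵀ) M'ᵀ x :=
  (transposeLinearEquiv l m 𝕜 𝕜).toLinearMap.toContinuousLinearMap.hasFDerivAt.comp_hasDerivAt
    x hM

theorem HasDerivAt.matrixInv [DecidableEq l] {P : 𝕜 → Matrix l l 𝕜} {P' : Matrix l l 𝕜}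
    (hP : HasDerivAt P P' x) (hx : IsUnit (P x)) :
    HasDerivAt (fun s => (P s)⁻¹) (-((P x)⁻¹ * P' * (P x)⁻¹)) x := by
  -- completeness has to be supplied for the uniformity of the ℓ∞-operator norm by hand
  have : HasSummableGeomSeries (Matrix l l 𝕜) :=
    @instHasSummableGeomSeriesOfCompleteSpace _ _ (FiniteDimensional.complete 𝕜 _)
  obtain ⟨u, hu⟩ := hx
  have hinv : ((u⁻¹ : (Matrix l l 𝕜)ˣ) : Matrix l l 𝕜) = (P x)⁻¹ := by
    rw [← hu, nonsing_inv_eq_ringInverse, Ring.inverse_unit]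
  have := (hu ▸ hasFDerivAt_ringInverse (𝕜 := 𝕜) u).comp_hasDerivAt x hP
  simp only [Function.comp_def, ← nonsing_inv_eq_ringInverse, hinv, _root_.neg_apply,
    ContinuousLinearMap.mulLeftRight_apply] at this
  exact this

theorem HasDerivAt.transpose_mul_mul {B : 𝕜 → Matrix m n 𝕜} {B' : Matrix m n 𝕜}
    (Q : Matrix m m 𝕜) (hB : HasDerivAt B B' x) :
    HasDerivAt (fun s => (B s)ᵀ * Q * B s) (B'ᵀ * Q * B x + (B x)ᵀ * Q * B') x := by
  have := (hB.matrixTranspose.matrixMul (hasDerivAt_const x Q)).matrixMul hB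
  exact this.congr_deriv (by rw [Matrix.mul_zero, add_zero])

theorem HasDerivAt.dotProduct_inv_mulVec [DecidableEq n] {P : 𝕜 → Matrix n n 𝕜}
    {P' : Matrix n n 𝕜} {v : 𝕜 → n → 𝕜} {v' : n → 𝕜} (hP : HasDerivAt P P' x)
    (hv : HasDerivAt v v' x) (hunit : IsUnit (P x)) (hsymm : (P x).IsSymm) :
    HasDerivAt (fun s => v s ⬝ᵥ (P s)⁻¹ *ᵥ v s)
      (2 * (v' ⬝ᵥ (P x)⁻¹ *ᵥ v x) - (P x)⁻¹ *ᵥ v x ⬝ᵥ P' *ᵥ ((P x)⁻¹ *ᵥ v x)) x := by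
  refine (hv.dotProduct ((hP.matrixInv hunit).mulVec hv)).congr_deriv ?_
  rw [dotProduct_add, neg_mulVec, dotProduct_neg, ← mulVec_mulVec, ← mulVec_mulVec,
    hsymm.inv.dotProduct_mulVec_comm (v x), hsymm.inv.dotProduct_mulVec_comm (v x),
    dotProduct_comm (P' *ᵥ _)]
  ring

end Calculus

theorem ROM_lyapunov_stability_general {n m : ℕ} (ρ μ h : ℝ)
    (hρ : 0 < ρ) (hμ : 0 < μ)
    (Q G : Matrix (Fin n) (Fin n) ℝ)
    (hQsymm : Qᵀ = Q)
    (hG : ∀ v : Fin n → ℝ, v ⬝ᵥ G.mulVec v ≤ 0)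
    (B : ℝ → Matrix (Fin n) (Fin m) ℝ) (B' : ℝ → Matrix (Fin n) (Fin m) ℝ)
    (hB : ∀ t, HasDerivAt B (B' t) t)
    (P : ℝ → Matrix (Fin m) (Fin m) ℝ) (hP : P = fun t => (B t)ᵀ * Q * B t)
    (hPinv : ∀ t, IsUnit (P t))
    (W : (Fin m → ℝ) → ℝ) (gradW : (Fin m → ℝ) → Fin m → ℝ)
    (F : (Fin m → ℝ) → Fin m → ℝ) (hF : ∀ x, F x = -gradW x)
    (X X' X'' : ℝ → Fin m → ℝ)
    (hX' : ∀ t, HasDerivAt X' (X'' t) t)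
    (hW : ∀ t, HasDerivAt (fun s => W (X s)) (gradW (X t) ⬝ᵥ X' t) t)
    (hode : ∀ t, X'' t =
      ((((B t)ᵀ * Q * B' t) + (μ / ρ) • ((B t)ᵀ * Q * G * Q * B t)) * (P t)⁻¹).mulVec (X' t)
      + (h ^ 2 / ρ) • (P t).mulVec (F (X t)))
    (Vr : ℝ → ℝ)
    (hVr : Vr = fun t =>
      (h ^ 2 / ρ) * W (X t) + (1 / 2) * (X' t ⬝ᵥ ((P t)⁻¹).mulVec (X' t)))
    (Y : ℝ → Fin n → ℝ) (hY : Y = fun t => (Q * B t * (P t)⁻¹).mulVec (X' t)) :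
    ∀ t, HasDerivAt Vr ((μ / ρ) * (Y t ⬝ᵥ G.mulVec (Y t))) t ∧
      (μ / ρ) * (Y t ⬝ᵥ G.mulVec (Y t)) ≤ 0 := by
  intro t
  subst hVr hY
  beta_reduce
  have hsymm : (P t).IsSymm := by
    simp only [hP, IsSymm, transpose_mul, transpose_transpose, hQsymm, Matrix.mul_assoc]
  have hPd : HasDerivAt P ((B' t)ᵀ * Q * B t + (B t)ᵀ * Q * B' t) t :=
    hP ▸ (hB t).transpose_mul_mul Q
  have hVd := ((hW t).const_mul (h ^ 2 / ρ)).add <|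
    (hPd.dotProduct_inv_mulVec (hX' t) (hPinv t) hsymm).const_mul (1 / 2)
  set S := (B t)ᵀ * Q * B' t
  set K := (B t)ᵀ * Q * G * Q * B t
  set z := (P t)⁻¹ *ᵥ X' t with hz
  have hPdz : z ⬝ᵥ ((B' t)ᵀ * Q * B t + S) *ᵥ z = 2 * (z ⬝ᵥ S *ᵥ z) := by
    rw [← dotProduct_transpose_add_mulVec_self]
    simp only [S, transpose_mul, transpose_transpose, hQsymm, Matrix.mul_assoc]
  have henergy : X'' t ⬝ᵥ z =
      z ⬝ᵥ S *ᵥ z + (μ / ρ) * (z ⬝ᵥ K *ᵥ z) - h ^ 2 / ρ * (gradW (X t) ⬝ᵥ X' t) := by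
    rw [hode t, ← mulVec_smul, dotProduct_mul_inv_mulVec_add_mulVec hsymm (hPinv t), hF]
    simp only [add_mulVec, smul_mulVec, dotProduct_add, dotProduct_smul, smul_dotProduct,
      neg_dotProduct, smul_eq_mul]
    ring
  have hYGY : (Q * B t) *ᵥ z ⬝ᵥ G *ᵥ ((Q * B t) *ᵥ z) = z ⬝ᵥ K *ᵥ z := by
    rw [← dotProduct_transpose_mul_mul_mulVec, transpose_mul, hQsymm]
    simp only [K, Matrix.mul_assoc]
  refine ⟨hVd.congr_deriv ?_, mul_nonpos_of_nonneg_of_nonpos (by positivity) (hG _)⟩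
  rw [← mulVec_mulVec (X' t) (Q * B t), ← hz, hYGY, hPdz, henergy]
  ring

theorem ROM_lyapunov_stability {n m : ℕ} (ρ μ h : ℝ)
    (hρ : 0 < ρ) (hμ : 0 < μ) (hh : 0 < h)
    (Q G : Matrix (Fin n) (Fin n) ℝ)
    (hQsymm : Qᵀ = Q) (hQidem : Q * Q = Q)
    (hGsymm : Gᵀ = G) (hG : ∀ v : Fin n → ℝ, v ⬝ᵥ G.mulVec v ≤ 0)
    (B : ℝ → Matrix (Fin n) (Fin m) ℝ) (B' : ℝ → Matrix (Fin n) (Fin m) ℝ)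
    (hB : ∀ t, HasDerivAt B (B' t) t)
    (P : ℝ → Matrix (Fin m) (Fin m) ℝ) (hP : P = fun t => (B t)ᵀ * Q * B t)
    (hPinv : ∀ t, IsUnit (P t))
    (W : (Fin m → ℝ) → ℝ) (gradW : (Fin m → ℝ) → Fin m → ℝ)
    (F : (Fin m → ℝ) → Fin m → ℝ) (hF : ∀ x, F x = -gradW x)
    (X X' X'' : ℝ → Fin m → ℝ)
    (hX : ∀ t, HasDerivAt X (X' t) t)
    (hX' : ∀ t, HasDerivAt X' (X'' t) t)
    (hW : ∀ t, HasDerivAt (fun s => W (X s)) (gradW (X t) ⬝ᵥ X' t) t)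
    (hode : ∀ t, X'' t =
      ((((B t)ᵀ * Q * B' t) + (μ / ρ) • ((B t)ᵀ * Q * G * Q * B t)) * (P t)⁻¹).mulVec (X' t)
      + (h ^ 2 / ρ) • (P t).mulVec (F (X t)))
    (Vr : ℝ → ℝ)
    (hVr : Vr = fun t =>
      (h ^ 2 / ρ) * W (X t) + (1 / 2) * (X' t ⬝ᵥ ((P t)⁻¹).mulVec (X' t)))
    (Y : ℝ → Fin n → ℝ) (hY : Y = fun t => (Q * B t * (P t)⁻¹).mulVec (X' t)) :
    ∀ t, HasDerivAt Vr ((μ / ρ) * (Y t ⬝ᵥ G.mulVec (Y t))) t ∧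
      (μ / ρ) * (Y t ⬝ᵥ G.mulVec (Y t)) ≤ 0 :=
  ROM_lyapunov_stability_general ρ μ h hρ hμ Q G hQsymm hG B B' hB P hP hPinv W gradW F hF X X' X''
    hX' hW hode Vr hVr Y hY
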